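/- Let f : ℝ^d → ℝ be L-smooth, G ∈ ℝ^{d×k} with orthonormal columns, λ > 0, and u uniform on √k · S^{k-1}. Then ‖E_u[((f(x+λGu) − f(x−λGu))/(2λ)) Gu] − GGᵀ∇f(x)‖ ≤ (L λ k^{3/2})/2. -/

import Mathlib

/-!
A gradient that is `L`-Lipschitz makes `f` agree with its first-order Taylor polynomial up to
`L‖h‖²/2`, so the central difference quotient along `h = Gu` is within `Lλ‖h‖²/2` of
`⟪∇f x, h⟫`. Since `‖Gu‖ = ‖u‖ = √k` almost surely, the estimator is therefore within
`Lλk^{3/2}/2` of `⟪∇f x, Gu⟫ Gu`, whose mean is `GGᵀ∇f x` because the uniform distribution on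
the sphere of radius `√k` is isotropic: `E[u uᵀ] = I`, by invariance under sign changes and
permutations of the coordinates.
-/

open MeasureTheory

noncomputable section

/-- `μ` is the uniform distribution on the sphere of radius `r` in `ℝ^n`. -/
def IsUniformSphere {n : ℕ} (μ : Measure (EuclideanSpace ℝ (Fin n))) (r : ℝ) : Prop :=
  IsProbabilityMeasure μ ∧ (∀ᵐ u ∂μ, ‖u‖ = r) ∧
    ∀ O : EuclideanSpace ℝ (Fin n) ≃ₗᵢ[ℝ] EuclideanSpace ℝ (Fin n), μ.map O = μ

section Smooth

variable {E : Type*} [NormedAddCommGroup E] [InnerProductSpace ℝ E] [CompleteSpace E]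
  {f : E → ℝ} {L : ℝ}

theorem abs_sub_sub_inner_gradient_le (hf : Differentiable ℝ f)
    (hL : ∀ x y, ‖gradient f x - gradient f y‖ ≤ L * ‖x - y‖) (x h : E) :
    |f (x + h) - f x - inner ℝ (gradient f x) h| ≤ L / 2 * ‖h‖ ^ 2 := by
  set F : ℝ → ℝ := fun t => f (x + t • h) - f x - t * inner ℝ (gradient f x) h
  have hF : ∀ t, HasDerivAt F (inner ℝ (gradient f (x + t • h) - gradient f x) h) t := by
    intro t
    have hline : HasDerivAt (fun t : ℝ => x + t • h) h t := by
      simpa using ((hasDerivAt_id t).smul_const h).const_add x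
    refine ((((hf _).hasGradientAt.hasFDerivAt.comp_hasDerivAt t hline).sub_const (f x)).sub
      ((hasDerivAt_id t).mul_const (inner ℝ (gradient f x) h))).congr_deriv ?_
    simp [inner_sub_left]
  have hB : ∀ t, HasDerivAt (fun t : ℝ => L / 2 * t ^ 2 * ‖h‖ ^ 2) (L * t * ‖h‖ ^ 2) t :=
    fun t => (((hasDerivAt_pow 2 t).const_mul (L / 2)).mul_const (‖h‖ ^ 2)).congr_deriv (by ring)
  have hbound : ∀ t ∈ Set.Ico (0 : ℝ) 1,
      ‖inner ℝ (gradient f (x + t • h) - gradient f x) h‖ ≤ L * t * ‖h‖ ^ 2 :=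
    fun t ht => calc
      _ ≤ ‖gradient f (x + t • h) - gradient f x‖ * ‖h‖ := norm_inner_le_norm _ _
      _ ≤ L * ‖x + t • h - x‖ * ‖h‖ := by gcongr; exact hL _ _
      _ = L * t * ‖h‖ ^ 2 := by
        rw [add_sub_cancel_left, norm_smul, Real.norm_of_nonneg ht.1]; ring
  have := image_norm_le_of_norm_deriv_right_le_deriv_boundary
    (fun t _ => (hF t).continuousAt.continuousWithinAt) (fun t _ => (hF t).hasDerivWithinAt)
    (by simp [F]) hB hbound (Set.right_mem_Icc.2 zero_le_one)
  simpa [F] using this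

theorem abs_centralDiff_sub_inner_gradient_le (hf : Differentiable ℝ f)
    (hL : ∀ x y, ‖gradient f x - gradient f y‖ ≤ L * ‖x - y‖) {lam : ℝ} (hlam : 0 < lam)
    (x h : E) :
    |(f (x + lam • h) - f (x - lam • h)) / (2 * lam) - inner ℝ (gradient f x) h|
      ≤ L * lam / 2 * ‖h‖ ^ 2 := by
  have hplus := abs_sub_sub_inner_gradient_le hf hL x (lam • h)
  have hminus := abs_sub_sub_inner_gradient_le hf hL x (-(lam • h))
  rw [norm_neg, ← sub_eq_add_neg, inner_neg_right] at hminus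
  rw [norm_smul, Real.norm_of_nonneg hlam.le, real_inner_smul_right] at hplus hminus
  set A := f (x + lam • h) - f x - lam * inner ℝ (gradient f x) h
  set B := f (x - lam • h) - f x - -(lam * inner ℝ (gradient f x) h)
  calc _ = |(A - B) / (2 * lam)| := by
        congr 1; field_simp; ring
    _ ≤ (L / 2 * (lam * ‖h‖) ^ 2 + L / 2 * (lam * ‖h‖) ^ 2) / (2 * lam) := by
        rw [abs_div, abs_of_pos (by positivity : 0 < 2 * lam)]
        gcongr
        exact (abs_sub _ _).trans (add_le_add hplus hminus)
    _ = L * lam / 2 * ‖h‖ ^ 2 := by field_simp; ring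

end Smooth

section OrthonormalIsometry

variable {𝕜 E ι : Type*} [RCLike 𝕜] [NormedAddCommGroup E] [InnerProductSpace 𝕜 E] [Fintype ι]
  {v : ι → E}

def Orthonormal.linearIsometry (hv : Orthonormal 𝕜 v) : EuclideanSpace 𝕜 ι →ₗᵢ[𝕜] E :=
  LinearMap.isometryOfInner
    ((Fintype.linearCombination 𝕜 v).comp (WithLp.linearEquiv 2 𝕜 (ι → 𝕜)).toLinearMap)
    fun u w => by simp [Fintype.linearCombination_apply, hv.inner_sum, PiLp.inner_apply, mul_comm]

theorem Orthonormal.linearIsometry_apply (hv : Orthonormal 𝕜 v) (u : EuclideanSpace 𝕜 ι) :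
    hv.linearIsometry u = ∑ i, u i • v i := by
  simp [Orthonormal.linearIsometry, Fintype.linearCombination_apply]

theorem Orthonormal.inner_linearIsometry_right (hv : Orthonormal 𝕜 v) (x : E)
    (u : EuclideanSpace 𝕜 ι) :
    inner 𝕜 x (hv.linearIsometry u) = inner 𝕜 (WithLp.toLp 2 fun i => inner 𝕜 (v i) x) u := by
  simp [hv.linearIsometry_apply, inner_sum, inner_smul_right, PiLp.inner_apply, mul_comm]

end OrthonormalIsometry

namespace IsUniformSphere

variable {n : ℕ} {μ : Measure (EuclideanSpace ℝ (Fin n))} {r : ℝ}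

theorem integrable_of_continuous (hμ : IsUniformSphere μ r) {F : Type*} [NormedAddCommGroup F]
    {g : EuclideanSpace ℝ (Fin n) → F} (hg : Continuous g) : Integrable g μ := by
  have := hμ.1
  obtain ⟨C, hC⟩ := (isCompact_sphere (0 : EuclideanSpace ℝ (Fin n)) r).exists_bound_of_continuousOn
    hg.continuousOn
  refine Integrable.of_bound hg.aestronglyMeasurable C ?_
  filter_upwards [hμ.2.1] with u hu
  exact hC u (by simpa using hu)

theorem integral_comp_linearIsometryEquiv (hμ : IsUniformSphere μ r) {F : Type*}
    [NormedAddCommGroup F] [NormedSpace ℝ F]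
    (O : EuclideanSpace ℝ (Fin n) ≃ₗᵢ[ℝ] EuclideanSpace ℝ (Fin n))
    (g : EuclideanSpace ℝ (Fin n) → F) :
    ∫ u, g (O u) ∂μ = ∫ u, g u ∂μ := by
  conv_rhs => rw [← hμ.2.2 O]
  exact (integral_map_equiv O.toMeasurableEquiv g).symm

theorem integral_coord_mul_coord_of_ne (hμ : IsUniformSphere μ r) {i j : Fin n} (hij : i ≠ j) :
    ∫ u, u i * u j ∂μ = 0 := by
  classical
  -- flipping the sign of the `i`-th coordinate
  let O := LinearIsometryEquiv.piLpCongrRight 2 fun l : Fin n =>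
    if l = i then LinearIsometryEquiv.neg ℝ (E := ℝ) else LinearIsometryEquiv.refl ℝ ℝ
  have hO : ∀ u, O u i * O u j = -(u i * u j) := fun u => by simp [O, hij.symm]
  have := hμ.integral_comp_linearIsometryEquiv O fun u => u i * u j
  simp only [hO, integral_neg] at this
  linarith

theorem integral_coord_mul_self (hμ : IsUniformSphere μ r) (i : Fin n) :
    ∫ u, u i * u i ∂μ = r ^ 2 / n := by
  have := hμ.1
  have hsame : ∀ j, ∫ u, u j * u j ∂μ = ∫ u, u i * u i ∂μ := fun j => by
    simpa using hμ.integral_comp_linearIsometryEquiv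
      (LinearIsometryEquiv.piLpCongrLeft 2 ℝ ℝ (Equiv.swap i j)) fun u => u i * u i
  have hsum : ∑ j, ∫ u, u j * u j ∂μ = r ^ 2 := by
    rw [← integral_finsetSum _ fun j _ => hμ.integrable_of_continuous (by fun_prop)]
    have : ∀ᵐ u ∂μ, ∑ j, u j * u j = r ^ 2 := by
      filter_upwards [hμ.2.1] with u hu
      rw [← hu, EuclideanSpace.norm_sq_eq]
      simp [sq]
    simp [integral_congr_ae this]
  simp only [hsame, Finset.sum_const, Finset.card_univ, Fintype.card_fin, nsmul_eq_mul] at hsum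
  have hn : (n : ℝ) ≠ 0 := Nat.cast_ne_zero.2 (Fin.pos i).ne'
  rw [eq_div_iff hn, mul_comm, hsum]

theorem integral_coord_mul_coord (hμ : IsUniformSphere μ r) (i j : Fin n) :
    ∫ u, u i * u j ∂μ = if i = j then r ^ 2 / n else 0 := by
  split_ifs with hij
  · subst hij
    exact hμ.integral_coord_mul_self i
  · exact hμ.integral_coord_mul_coord_of_ne hij

theorem integral_inner_smul_self (hμ : IsUniformSphere μ r) (a : EuclideanSpace ℝ (Fin n)) :
    ∫ u, inner ℝ a u • u ∂μ = (r ^ 2 / n) • a := by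
  ext j
  calc (∫ u, inner ℝ a u • u ∂μ) j = ∫ u, (inner ℝ a u • u) j ∂μ :=
        ((EuclideanSpace.proj j).integral_comp_comm (φ := fun u => inner ℝ a u • u)
          (hμ.integrable_of_continuous (by fun_prop))).symm
    _ = ∫ u, ∑ i, a i * (u i * u j) ∂μ := by
        congr with u
        simp only [PiLp.smul_apply, smul_eq_mul, PiLp.inner_apply, Finset.sum_mul]
        exact Finset.sum_congr rfl fun i _ => by simp only [RCLike.inner_apply, conj_trivial]; ring
    _ = ∑ i, a i * ∫ u, u i * u j ∂μ := by
        rw [integral_finsetSum _ fun i _ => hμ.integrable_of_continuous (by fun_prop)]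
        simp only [integral_const_mul]
    _ = ((r ^ 2 / n) • a) j := by simp [hμ.integral_coord_mul_coord, mul_comm]

theorem integral_inner_smul_orthonormal {E : Type*} [NormedAddCommGroup E]
    [InnerProductSpace ℝ E] [CompleteSpace E] (hμ : IsUniformSphere μ √n) {G : Fin n → E}
    (hG : Orthonormal ℝ G) (y : E) :
    ∫ u, inner ℝ y (hG.linearIsometry u) • hG.linearIsometry u ∂μ = ∑ i, inner ℝ (G i) y • G i := by
  calc _ = ∫ u, hG.linearIsometry (inner ℝ (WithLp.toLp 2 fun i => inner ℝ (G i) y) u • u) ∂μ := by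
        congr with u
        rw [hG.inner_linearIsometry_right, LinearIsometry.map_smul]
    _ = _ := by
        rw [LinearIsometry.integral_comp_comm, hμ.integral_inner_smul_self,
          Real.sq_sqrt (Nat.cast_nonneg n), LinearIsometry.map_smul, hG.linearIsometry_apply,
          Finset.smul_sum]
        refine Finset.sum_congr rfl fun i _ => ?_
        rw [div_self (Nat.cast_ne_zero.2 (Fin.pos i).ne'), one_smul]

end IsUniformSphere

/-- For `L`-smooth `f`, `G` with orthonormal columns, `λ > 0`, and `u` uniform on the
sphere of radius `√k`,
`‖E[((f(x+λGu) − f(x−λGu))/(2λ)) Gu] − GGᵀ∇f(x)‖ ≤ Lλk^{3/2}/2`. -/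
theorem subspace_estimator_bias (d k : ℕ) (L lam : ℝ) (hlam : 0 < lam)
    (f : EuclideanSpace ℝ (Fin d) → ℝ) (hf : Differentiable ℝ f)
    (hL : ∀ x y, ‖gradient f x - gradient f y‖ ≤ L * ‖x - y‖)
    (G : Fin k → EuclideanSpace ℝ (Fin d)) (hG : Orthonormal ℝ G)
    (μ : Measure (EuclideanSpace ℝ (Fin k)))
    (hμ : IsUniformSphere μ (Real.sqrt k))
    (x : EuclideanSpace ℝ (Fin d)) :
    ‖(∫ u, ((f (x + lam • ∑ i, u i • G i) - f (x - lam • ∑ i, u i • G i)) / (2 * lam))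
          • (∑ i, u i • G i) ∂μ)
        - ∑ i, (inner ℝ (G i) (gradient f x) : ℝ) • G i‖
      ≤ L * lam * (k : ℝ) ^ ((3 : ℝ) / 2) / 2 := by
  have := hμ.1
  simp_rw [← hG.linearIsometry_apply, ← hμ.integral_inner_smul_orthonormal hG]
  set T := hG.linearIsometry
  set φ := fun u => ((f (x + lam • T u) - f (x - lam • T u)) / (2 * lam)) • T u
  set ψ := fun u => inner ℝ (gradient f x) (T u) • T u
  have hφ : Continuous φ := by
    have := hf.continuous
    fun_prop
  have hpow : (k : ℝ) ^ ((3 : ℝ) / 2) = k * √k := by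
    rw [show (3 : ℝ) / 2 = 1 + 1 / 2 by norm_num, Real.rpow_add' (Nat.cast_nonneg k) (by norm_num),
      Real.rpow_one, Real.sqrt_eq_rpow]
  have hclose : ∀ᵐ u ∂μ, ‖φ u - ψ u‖ ≤ L * lam * (k : ℝ) ^ ((3 : ℝ) / 2) / 2 := by
    filter_upwards [hμ.2.1] with u hu
    rw [← sub_smul, norm_smul, T.norm_map, hu]
    calc _ ≤ L * lam / 2 * ‖T u‖ ^ 2 * √k := by
          gcongr
          exact abs_centralDiff_sub_inner_gradient_le hf hL hlam x (T u)
      _ = _ := by rw [T.norm_map, hu, Real.sq_sqrt (Nat.cast_nonneg k), hpow]; ring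
  have hψ : Continuous ψ := by fun_prop
  calc _ = ‖∫ u, (φ u - ψ u) ∂μ‖ := by
        rw [integral_sub (hμ.integrable_of_continuous hφ) (hμ.integrable_of_continuous hψ)]
    _ ≤ _ := by simpa using norm_integral_le_of_norm_le_const hclose
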